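/- Let α be a positive integer, 0 < p = 1 - q < 1, z > 1 with z ≤ α, and let k satisfy 2 ≤ k < z. Then h₂(k) = ∑_{j=k}^{α} [(α-k)!/(α-j)!]·[(k-1)!/j!]·(p/q)^{j-k}·E[(B_{α,p}-z)^+] satisfies h₂(k) ≤ 2(q^{k-α} - 1)/(pz). -/

import Mathlib

/-!
Write `w_j = C(α,j) p^j q^(α-j)` for the binomial weights. The coefficient of `E[(B-z)^+]` in
`h₂(k)` is `∑_{j ≥ k} w_j / (k w_k) ≤ 1 / (k w_k)`. For `z > k` we have `z (j-z)^+ ≤ j (j-k)^+`,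
and `j (j-k) ≤ 2 C(j,k)` once `k ≥ 2`; with `C(α,j) C(j,k) = C(α,k) C(α-k,j-k)` this gives
`z E[(B-z)^+] ≤ 2 C(α,k) p^k (1 - q^(α-k))`. Multiplying, `h₂(k) ≤ 2 (q^(k-α) - 1) / (k z)`,
and `p < 1 < k`.
-/

open Finset

/-- `E[(B_{α,p} - z)^+]`, the expected call function of a binomial random variable
`B_{α,p}` with `P(B = j) = C(α,j) p^j (1-p)^{α-j}` for `j = 0,…,α`. -/
noncomputable def binomCallExp (α : ℕ) (p z : ℝ) : ℝ :=
  ∑ j ∈ Finset.range (α + 1),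
    (α.choose j : ℝ) * p ^ j * (1 - p) ^ (α - j) * max ((j : ℝ) - z) 0

/-- `h₁(k) = ∑_{j=k}^{α} [(α-k)!/(α-j)!]·[(k-1)!/j!]·(p/q)^{j-k}·(j-z)^+` with `q = 1 - p`. -/
noncomputable def h1 (α : ℕ) (p z : ℝ) (k : ℕ) : ℝ :=
  ∑ j ∈ Finset.Icc k α,
    ((α - k).factorial : ℝ) / ((α - j).factorial : ℝ) *
      (((k - 1).factorial : ℝ) / (j.factorial : ℝ)) *
        (p / (1 - p)) ^ (j - k) * max ((j : ℝ) - z) 0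

/-- `h₂(k) = ∑_{j=k}^{α} [(α-k)!/(α-j)!]·[(k-1)!/j!]·(p/q)^{j-k}·E[(B_{α,p}-z)^+]`
with `q = 1 - p`. -/
noncomputable def h2 (α : ℕ) (p z : ℝ) (k : ℕ) : ℝ :=
  ∑ j ∈ Finset.Icc k α,
    ((α - k).factorial : ℝ) / ((α - j).factorial : ℝ) *
      (((k - 1).factorial : ℝ) / (j.factorial : ℝ)) *
        (p / (1 - p)) ^ (j - k) * binomCallExp α p z

/-- The solution `g_z` of the binomial Stein equation: `g_z(0) = 0`,
`g_z(k) = -∑_{j=k}^{α} [(α-k)!/(α-j)!]·[(k-1)!/j!]·(p/q)^{j-k}·[(j-z)^+ - E(B_{α,p}-z)^+]`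
for `1 ≤ k ≤ α`, extended by `g_z(k) = 0` for `k > α` (in particular `g_z(α+1) = 0`). -/
noncomputable def steinSol (α : ℕ) (p z : ℝ) (k : ℕ) : ℝ :=
  if k = 0 ∨ α < k then 0
  else
    -∑ j ∈ Finset.Icc k α,
      ((α - k).factorial : ℝ) / ((α - j).factorial : ℝ) *
        (((k - 1).factorial : ℝ) / (j.factorial : ℝ)) *
          (p / (1 - p)) ^ (j - k) * (max ((j : ℝ) - z) 0 - binomCallExp α p z)

theorem Nat.mul_sub_le_two_mul_choose {k : ℕ} (hk : 2 ≤ k) (j : ℕ) :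
    j * (j - k) ≤ 2 * j.choose k := by
  rcases le_or_gt j k with hjk | hkj
  · simp [Nat.sub_eq_zero_of_le hjk]
  obtain ⟨m, rfl⟩ : ∃ m, j = k + (m + 1) := ⟨j - k - 1, by omega⟩
  -- `(m+1) C(j, m+1) = j C(j-1, m)` and `(m+1)² ≤ 2 C(m+2, m) ≤ 2 C(j-1, m)` since `k ≥ 2`.
  have hrec : (k + m + 1) * (k + m).choose m = (k + (m + 1)).choose (m + 1) * (m + 1) :=
    Nat.add_one_mul_choose_eq (k + m) m
  have htri : (m + 2) * (m + 1) = 2 * (m + 2).choose m := by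
    have h := Nat.add_one_mul_choose_eq (m + 1) 1
    rw [Nat.choose_one_right] at h
    rw [Nat.choose_symm_add (a := m) (b := 2)]
    linarith
  have hmono : (m + 2).choose m ≤ (k + m).choose m := Nat.choose_le_choose m (by omega)
  rw [Nat.add_sub_cancel_left, Nat.choose_symm_add]
  refine Nat.le_of_mul_le_mul_right ?_ (Nat.succ_pos m)
  nlinarith

theorem Nat.choose_mul_mul_sub_le {n k j : ℕ} (hk : 2 ≤ k) (hkj : k ≤ j) :
    n.choose j * (j * (j - k)) ≤ 2 * (n.choose k * (n - k).choose (j - k)) := by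
  rw [← Nat.choose_mul hkj]
  have := Nat.mul_sub_le_two_mul_choose hk j
  calc n.choose j * (j * (j - k)) ≤ n.choose j * (2 * j.choose k) := by gcongr
    _ = 2 * (n.choose j * j.choose k) := by ring

noncomputable def binomWeight (n : ℕ) (p : ℝ) (j : ℕ) : ℝ :=
  n.choose j * p ^ j * (1 - p) ^ (n - j)

section binomWeight

variable {p : ℝ}

theorem binomWeight_nonneg (hp0 : 0 ≤ p) (hp1 : p ≤ 1) (n j : ℕ) : 0 ≤ binomWeight n p j := by
  have : 0 ≤ 1 - p := by linarith
  unfold binomWeight; positivity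

theorem sum_binomWeight (n : ℕ) (p : ℝ) : ∑ j ∈ range (n + 1), binomWeight n p j = 1 := by
  have h := add_pow p (1 - p) n
  rw [add_sub_cancel, one_pow] at h
  rw [h]
  exact sum_congr rfl fun j _ => by unfold binomWeight; ring

theorem sum_binomWeight_succ (n : ℕ) (p : ℝ) :
    ∑ i ∈ range n, binomWeight n p (i + 1) = 1 - (1 - p) ^ n := by
  have h := sum_binomWeight n p
  rw [sum_range_succ'] at h
  simp only [binomWeight, Nat.choose_zero_right, pow_zero, Nat.sub_zero, Nat.cast_one,
    one_mul] at h ⊢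
  linarith

theorem binomWeight_mul_mul_sub_le (hp0 : 0 ≤ p) (hp1 : p ≤ 1) {n k j : ℕ} (hk : 2 ≤ k)
    (hkj : k ≤ j) (hjn : j ≤ n) :
    binomWeight n p j * ((j * (j - k) : ℕ) : ℝ) ≤
      2 * n.choose k * p ^ k * binomWeight (n - k) p (j - k) := by
  obtain ⟨d, rfl⟩ := Nat.exists_eq_add_of_le hkj
  obtain ⟨e, rfl⟩ := Nat.exists_eq_add_of_le hjn
  have : 0 ≤ 1 - p := by linarith
  have hsub : k + d + e - k = d + e := by omega
  have hchoose := Nat.choose_mul_mul_sub_le (n := k + d + e) hk hkj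
  rw [Nat.add_sub_cancel_left, hsub] at hchoose
  have hchoose' : ((k + d + e).choose (k + d) * ((k + d) * d) : ℝ) ≤
      2 * ((k + d + e).choose k * (d + e).choose d) := by exact_mod_cast hchoose
  simp only [binomWeight, Nat.add_sub_cancel_left, hsub, pow_add]
  push_cast
  nlinarith [mul_le_mul_of_nonneg_right hchoose' (by positivity : 0 ≤ p ^ k * p ^ d * (1 - p) ^ e)]

theorem sum_binomWeight_mul_mul_sub_le (hp0 : 0 ≤ p) (hp1 : p ≤ 1) {n k : ℕ} (hk : 2 ≤ k)
    (hkn : k ≤ n) :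
    ∑ j ∈ range (n + 1), binomWeight n p j * ((j * (j - k) : ℕ) : ℝ) ≤
      2 * n.choose k * p ^ k * (1 - (1 - p) ^ (n - k)) := by
  obtain ⟨m, rfl⟩ := Nat.exists_eq_add_of_le hkn
  have hlow : ∑ j ∈ range (k + 1), binomWeight (k + m) p j * ((j * (j - k) : ℕ) : ℝ) = 0 :=
    sum_eq_zero fun j hj => by
      rw [Nat.sub_eq_zero_of_le (Nat.lt_succ_iff.mp (mem_range.mp hj))]; simp
  rw [show k + m + 1 = k + 1 + m by ring, sum_range_add, hlow, zero_add, Nat.add_sub_cancel_left,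
    ← sum_binomWeight_succ, mul_sum]
  refine sum_le_sum fun i hi => ?_
  have h := binomWeight_mul_mul_sub_le hp0 hp1 hk (n := k + m) (j := k + 1 + i) (by omega)
    (by have := mem_range.mp hi; omega)
  simpa only [show k + 1 + i - k = i + 1 by omega, Nat.add_sub_cancel_left] using h

end binomWeight

theorem mul_max_sub_le {k : ℕ} {z : ℝ} (hkz : (k : ℝ) < z) (j : ℕ) :
    z * max ((j : ℝ) - z) 0 ≤ ((j * (j - k) : ℕ) : ℝ) := by
  rcases le_or_gt (j : ℝ) z with hjz | hzj
  · rw [max_eq_right (by linarith), mul_zero]; positivity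
  · have hkj : k ≤ j := by exact_mod_cast (hkz.trans hzj).le
    rw [max_eq_left (by linarith)]
    push_cast [Nat.cast_sub hkj]
    nlinarith [sq_nonneg ((j : ℝ) - z), (k.cast_nonneg : (0 : ℝ) ≤ k)]

section binomCallExp

variable {α k : ℕ} {p z : ℝ}

theorem binomCallExp_nonneg (hp0 : 0 ≤ p) (hp1 : p ≤ 1) : 0 ≤ binomCallExp α p z :=
  sum_nonneg fun j _ => mul_nonneg (binomWeight_nonneg hp0 hp1 α j) (le_max_right _ _)

theorem mul_binomCallExp_le (hp0 : 0 ≤ p) (hp1 : p ≤ 1) (hk : 2 ≤ k) (hkα : k ≤ α)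
    (hkz : (k : ℝ) < z) :
    z * binomCallExp α p z ≤ 2 * α.choose k * p ^ k * (1 - (1 - p) ^ (α - k)) :=
  calc z * binomCallExp α p z
      = ∑ j ∈ range (α + 1), binomWeight α p j * (z * max ((j : ℝ) - z) 0) := by
        rw [binomCallExp, mul_sum]
        exact sum_congr rfl fun j _ => by unfold binomWeight; ring
    _ ≤ ∑ j ∈ range (α + 1), binomWeight α p j * ((j * (j - k) : ℕ) : ℝ) :=
        sum_le_sum fun j _ =>
          mul_le_mul_of_nonneg_left (mul_max_sub_le hkz j) (binomWeight_nonneg hp0 hp1 α j)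
    _ ≤ _ := sum_binomWeight_mul_mul_sub_le hp0 hp1 hk hkα

end binomCallExp

noncomputable def steinWeight (α : ℕ) (p : ℝ) (k j : ℕ) : ℝ :=
  ((α - k).factorial : ℝ) / ((α - j).factorial : ℝ) *
    (((k - 1).factorial : ℝ) / (j.factorial : ℝ)) * (p / (1 - p)) ^ (j - k)

section steinWeight

variable {α k : ℕ} {p : ℝ}

theorem h2_eq_sum_steinWeight_mul (z : ℝ) :
    h2 α p z k = (∑ j ∈ Icc k α, steinWeight α p k j) * binomCallExp α p z :=
  (sum_mul ..).symm

theorem steinWeight_mul_binomWeight (hp1 : p ≠ 1) (hk : 1 ≤ k) {j : ℕ} (hkj : k ≤ j)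
    (hjα : j ≤ α) : steinWeight α p k j * (k * binomWeight α p k) = binomWeight α p j := by
  obtain ⟨d, rfl⟩ := Nat.exists_eq_add_of_le hkj
  obtain ⟨e, rfl⟩ := Nat.exists_eq_add_of_le hjα
  have hq : 1 - p ≠ 0 := sub_ne_zero.mpr hp1.symm
  have hfact : (k.factorial : ℝ) = k * (k - 1).factorial := by
    exact_mod_cast (Nat.mul_factorial_pred (by omega)).symm
  have hsub : k + d + e - k = d + e := by omega
  simp only [steinWeight, binomWeight, Nat.cast_choose ℝ hjα, Nat.cast_choose ℝ (hkj.trans hjα),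
    hsub, Nat.add_sub_cancel_left, hfact, div_pow, pow_add]
  field_simp

theorem sum_steinWeight_mul_le (hp0 : 0 ≤ p) (hp1 : p < 1) (hk : 1 ≤ k) :
    (∑ j ∈ Icc k α, steinWeight α p k j) * (k * binomWeight α p k) ≤ 1 := by
  rw [sum_mul, sum_congr rfl fun j hj =>
    steinWeight_mul_binomWeight hp1.ne hk (mem_Icc.mp hj).1 (mem_Icc.mp hj).2,
    ← sum_binomWeight α p]
  exact sum_le_sum_of_subset_of_nonneg
    (fun j hj => by simp only [mem_Icc, mem_range] at hj ⊢; omega)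
    fun j _ _ => binomWeight_nonneg hp0 hp1.le α j

end steinWeight

theorem h2_le {α k : ℕ} {p z : ℝ} (hp0 : 0 < p) (hp1 : p < 1) (hk : 2 ≤ k) (hkα : k ≤ α)
    (hkz : (k : ℝ) < z) :
    h2 α p z k ≤ 2 * (1 - (1 - p) ^ (α - k)) / (k * (1 - p) ^ (α - k) * z) := by
  have hk0 : (0 : ℝ) < k := by exact_mod_cast (by omega : 0 < k)
  have hq : 0 < 1 - p := by linarith
  have hz : 0 < z := hk0.trans hkz
  have hC : (0 : ℝ) < α.choose k * p ^ k := by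
    have : (0 : ℝ) < α.choose k := by exact_mod_cast Nat.choose_pos hkα
    positivity
  have hc := sum_steinWeight_mul_le (α := α) hp0.le hp1 (by omega : 1 ≤ k)
  have hE := mul_binomCallExp_le hp0.le hp1.le hk hkα hkz
  have hE0 : 0 ≤ z * binomCallExp α p z := mul_nonneg hz.le (binomCallExp_nonneg hp0.le hp1.le)
  rw [le_div_iff₀ (by positivity), h2_eq_sum_steinWeight_mul]
  refine le_of_mul_le_mul_right ?_ hC
  calc (∑ j ∈ Icc k α, steinWeight α p k j) * binomCallExp α p z * (k * (1 - p) ^ (α - k) * z) *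
        (α.choose k * p ^ k)
      = (∑ j ∈ Icc k α, steinWeight α p k j) * (k * binomWeight α p k) *
          (z * binomCallExp α p z) := by unfold binomWeight; ring
    _ ≤ z * binomCallExp α p z := mul_le_of_le_one_left hE0 hc
    _ ≤ 2 * (1 - (1 - p) ^ (α - k)) * (α.choose k * p ^ k) := by linarith

theorem h2_le_of_lt_general (α : ℕ) (p q : ℝ)
    (hq : q = 1 - p) (hp : 0 < p) (hp1 : p < 1) (z : ℝ) (hzα : z ≤ (α : ℝ))
    (k : ℕ) (hk : 2 ≤ k) (hkz : (k : ℝ) < z) :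
    h2 α p z k ≤ 2 * (q ^ ((k : ℤ) - (α : ℤ)) - 1) / (p * z) := by
  have hkα : k ≤ α := by exact_mod_cast (hkz.trans_le hzα).le
  have hpk : p ≤ k := by linarith [show (2 : ℝ) ≤ k by exact_mod_cast hk]
  have hz : 0 < z := by linarith
  set Q := (1 - p) ^ (α - k)
  have hQ : 0 < Q := pow_pos (by linarith) _
  have hQ1 : Q ≤ 1 := pow_le_one₀ (by linarith) (by linarith)
  have hqQ : q ^ ((k : ℤ) - α) = Q⁻¹ := by
    rw [hq, show (k : ℤ) - α = -((α - k : ℕ) : ℤ) by push_cast [Nat.cast_sub hkα]; ring,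
      zpow_neg, zpow_natCast]
  calc h2 α p z k ≤ 2 * (1 - Q) / (k * Q * z) := h2_le hp hp1 hk hkα hkz
    _ ≤ 2 * (1 - Q) / (p * Q * z) := by gcongr
    _ = 2 * (q ^ ((k : ℤ) - α) - 1) / (p * z) := by rw [hqQ]; field_simp

/-- For `z > 1` with `z ≤ α`, and `2 ≤ k < z`,
`h₂(k) ≤ 2(q^{k-α} - 1)/(pz)`. -/
theorem h2_le_of_lt (α : ℕ) (hα : 0 < α) (p q : ℝ)
    (hq : q = 1 - p) (hp : 0 < p) (hp1 : p < 1) (z : ℝ) (hz : 1 < z) (hzα : z ≤ (α : ℝ))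
    (k : ℕ) (hk : 2 ≤ k) (hkz : (k : ℝ) < z) :
    h2 α p z k ≤ 2 * (q ^ ((k : ℤ) - (α : ℤ)) - 1) / (p * z) :=
  h2_le_of_lt_general α p q hq hp hp1 z hzα k hk hkz
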